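/- Let ℓ ∈ ℕ, g ∈ SL(2,ℝ), and c : {−ℓ,…,ℓ} → ℂ. Then there exists c' : {−ℓ,…,ℓ} → ℂ such that for every θ ∈ ℝ and every branch φ of the circle action of g: σ_K(θ,g)^{−ℓ}·Σ_{n=−ℓ}^{ℓ} c(n)·exp(i·n·φ(θ)) = Σ_{n=−ℓ}^{ℓ} c'(n)·exp(i·n·θ). In other words, for integer ℓ ≥ 0 the (2ℓ+1)-dimensional space of trigonometric polynomials spanned by e^{inθ} with |n| ≤ ℓ is invariant under T_ℓ(g) for every g, so the representation T_ℓ is reducible. -/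

import Mathlib

open Real

noncomputable section

abbrev SL2R := Matrix.SpecialLinearGroup (Fin 2) ℝ

/-- `u(θ,g) = a·cos(θ/2) + c·sin(θ/2)` for `g = [[a,b],[c,d]]`. -/
def uFun (g : SL2R) (θ : ℝ) : ℝ :=
  (g : Matrix (Fin 2) (Fin 2) ℝ) 0 0 * Real.cos (θ / 2) +
    (g : Matrix (Fin 2) (Fin 2) ℝ) 1 0 * Real.sin (θ / 2)

/-- `w(θ,g) = b·cos(θ/2) + d·sin(θ/2)` for `g = [[a,b],[c,d]]`. -/
def wFun (g : SL2R) (θ : ℝ) : ℝ :=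
  (g : Matrix (Fin 2) (Fin 2) ℝ) 0 1 * Real.cos (θ / 2) +
    (g : Matrix (Fin 2) (Fin 2) ℝ) 1 1 * Real.sin (θ / 2)

/-- The multiplier `σ_K(θ,g) = 1/(u² + w²)`. -/
def sigmaK (g : SL2R) (θ : ℝ) : ℝ := 1 / (uFun g θ ^ 2 + wFun g θ ^ 2)

/-- `φ : ℝ → ℝ` is a branch of the circle action of `g`. -/
def IsBranch (g : SL2R) (φ : ℝ → ℝ) : Prop :=
  ∀ θ : ℝ,
    Real.cos (φ θ / 2) = uFun g θ * Real.sqrt (sigmaK g θ) ∧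
    Real.sin (φ θ / 2) = wFun g θ * Real.sqrt (sigmaK g θ)

/-- `σ_K(θ,g)^{-ℓ} := exp(-ℓ·log σ_K(θ,g))`, as a complex number. -/
def sigmaKpow (g : SL2R) (θ : ℝ) (ℓ : ℂ) : ℂ :=
  Complex.exp (-ℓ * Real.log (sigmaK g θ))

set_option maxHeartbeats 1000000 in
lemma s_pos (g : SL2R) (θ : ℝ) : 0 < uFun g θ ^ 2 + wFun g θ ^ 2 := by
  have hdet : (g : Matrix (Fin 2) (Fin 2) ℝ) 0 0 * (g : Matrix (Fin 2) (Fin 2) ℝ) 1 1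
      - (g : Matrix (Fin 2) (Fin 2) ℝ) 0 1 * (g : Matrix (Fin 2) (Fin 2) ℝ) 1 0 = 1 := by
    have := g.2
    rwa [Matrix.det_fin_two] at this
  have hpyth := Real.sin_sq_add_cos_sq (θ / 2)
  set A := (g : Matrix (Fin 2) (Fin 2) ℝ) 0 0
  set B := (g : Matrix (Fin 2) (Fin 2) ℝ) 0 1
  set C := (g : Matrix (Fin 2) (Fin 2) ℝ) 1 0
  set D := (g : Matrix (Fin 2) (Fin 2) ℝ) 1 1
  have key : (1:ℝ) = (uFun g θ * D - wFun g θ * C) ^ 2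
      + (wFun g θ * A - uFun g θ * B) ^ 2 := by
    simp only [uFun, wFun]
    linear_combination (-(1 + (A * D - B * C)) * (Real.sin (θ/2) ^ 2 + Real.cos (θ/2) ^ 2)) * hdet
      + (-1 : ℝ) * hpyth
  rcases lt_or_ge 0 (uFun g θ ^ 2 + wFun g θ ^ 2) with h | h
  · exact h
  · exfalso
    have h1 : uFun g θ = 0 := by nlinarith [sq_nonneg (uFun g θ), sq_nonneg (wFun g θ)]
    have h2 : wFun g θ = 0 := by nlinarith [sq_nonneg (uFun g θ), sq_nonneg (wFun g θ)]
    rw [h1, h2] at key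
    norm_num at key

/-- for integer `ℓ ≥ 0`, the space of trigonometric polynomials
`Σ_{|n| ≤ ℓ} c(n)·e^{inθ}` is invariant under the circle realisation of `T_ℓ(g)`,
for every `g ∈ SL(2,ℝ)`; hence `T_ℓ` is reducible. -/
theorem stmt2 (ℓ : ℕ) (g : SL2R) (c : ℤ → ℂ) :
    ∃ c' : ℤ → ℂ, ∀ (θ : ℝ) (φ : ℝ → ℝ), IsBranch g φ →
      sigmaKpow g θ (ℓ : ℂ) *
          ∑ n ∈ Finset.Icc (-(ℓ : ℤ)) (ℓ : ℤ), c n * Complex.exp (Complex.I * n * φ θ) =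
        ∑ n ∈ Finset.Icc (-(ℓ : ℤ)) (ℓ : ℤ), c' n * Complex.exp (Complex.I * n * θ) := by
  classical
  set a : ℂ := ((g : Matrix (Fin 2) (Fin 2) ℝ) 0 0 : ℂ) with ha
  set b : ℂ := ((g : Matrix (Fin 2) (Fin 2) ℝ) 0 1 : ℂ) with hb
  set e : ℂ := ((g : Matrix (Fin 2) (Fin 2) ℝ) 1 0 : ℂ) with he
  set d : ℂ := ((g : Matrix (Fin 2) (Fin 2) ℝ) 1 1 : ℂ) with hd
  set α : ℂ := ((a + b * Complex.I) - Complex.I * (e + d * Complex.I)) / 2 with hα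
  set β : ℂ := ((a + b * Complex.I) + Complex.I * (e + d * Complex.I)) / 2 with hβ
  set α' : ℂ := ((a - b * Complex.I) - Complex.I * (e - d * Complex.I)) / 2 with hα'
  set β' : ℂ := ((a - b * Complex.I) + Complex.I * (e - d * Complex.I)) / 2 with hβ'
  set P : Polynomial ℂ := ∑ n ∈ Finset.Icc (-(ℓ : ℤ)) (ℓ : ℤ), Polynomial.C (c n) *
      ((Polynomial.C α * Polynomial.X + Polynomial.C β) ^ ((ℓ : ℤ) + n).toNat *
        (Polynomial.C α' * Polynomial.X + Polynomial.C β') ^ ((ℓ : ℤ) - n).toNat) with hP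
  have hdeg : P.natDegree < 2 * ℓ + 1 := by
    refine Nat.lt_succ_of_le (Polynomial.natDegree_sum_le_of_forall_le _ _ fun n hn => ?_)
    rw [Finset.mem_Icc] at hn
    refine (Polynomial.natDegree_C_mul_le _ _).trans (Polynomial.natDegree_mul_le.trans ?_)
    have h1 : ((Polynomial.C α * Polynomial.X + Polynomial.C β) ^ ((ℓ : ℤ) + n).toNat).natDegree
        ≤ ((ℓ : ℤ) + n).toNat := Polynomial.natDegree_pow_le.trans
      (by nlinarith [Polynomial.natDegree_linear_le (a := α) (b := β)])
    have h2 : ((Polynomial.C α' * Polynomial.X + Polynomial.C β') ^ ((ℓ : ℤ) - n).toNat).natDegree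
        ≤ ((ℓ : ℤ) - n).toNat := Polynomial.natDegree_pow_le.trans
      (by nlinarith [Polynomial.natDegree_linear_le (a := α') (b := β')])
    have : ((ℓ : ℤ) + n).toNat + ((ℓ : ℤ) - n).toNat = 2 * ℓ := by omega
    omega
  refine ⟨fun m => P.coeff ((ℓ : ℤ) + m).toNat, ?_⟩
  intro θ φ hφ
  obtain ⟨hcφ, hsφ⟩ := hφ θ
  have hspos := s_pos g θ
  set s : ℝ := uFun g θ ^ 2 + wFun g θ ^ 2 with hs_def
  have hsC : (s : ℂ) ≠ 0 := Complex.ofReal_ne_zero.mpr hspos.ne'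
  set z : ℂ := Complex.exp ((θ : ℂ) * Complex.I) with hz
  set q : ℂ := Complex.exp (((θ / 2 : ℝ) : ℂ) * Complex.I) with hq
  have hqne : q ≠ 0 := Complex.exp_ne_zero _
  have hzne : z ≠ 0 := Complex.exp_ne_zero _
  have hq2 : q ^ 2 = z := by
    rw [hq, hz, ← Complex.exp_nat_mul]
    congr 1
    push_cast
    ring
  set M : ℂ := (uFun g θ : ℂ) + (wFun g θ : ℂ) * Complex.I with hM
  set N : ℂ := (uFun g θ : ℂ) - (wFun g θ : ℂ) * Complex.I with hN
  have hMN : M * N = (s : ℂ) := by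
    rw [hM, hN, hs_def]
    push_cast
    ring_nf
    rw [Complex.I_sq]
    ring
  have hMne : M ≠ 0 := fun h => hsC (by rw [← hMN, h, zero_mul])
  have hNne : N ≠ 0 := fun h => hsC (by rw [← hMN, h, mul_zero])
  -- sigmaKpow = s ^ ℓ
  have hσpow : sigmaKpow g θ (ℓ : ℂ) = (s : ℂ) ^ ℓ := by
    rw [sigmaKpow, sigmaK, ← hs_def, one_div, Real.log_inv]
    have : (-(ℓ : ℂ)) * ((- Real.log s : ℝ) : ℂ) = (ℓ : ℕ) * ((Real.log s : ℝ) : ℂ) := by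
      push_cast; ring
    rw [this, Complex.exp_nat_mul, ← Complex.ofReal_exp, Real.exp_log hspos]
  -- branch gives exp(i φθ) = M² / s
  have hE : Complex.exp ((φ θ : ℂ) * Complex.I) = M ^ 2 * (s : ℂ)⁻¹ := by
    have h2 : Complex.exp ((φ θ : ℂ) * Complex.I)
        = Complex.exp (((φ θ / 2 : ℝ) : ℂ) * Complex.I) ^ 2 := by
      rw [← Complex.exp_nat_mul]; congr 1; push_cast; ring
    have hσ : Real.sqrt (sigmaK g θ) ^ 2 = s⁻¹ := by
      rw [Real.sq_sqrt (by rw [sigmaK, ← hs_def]; positivity), sigmaK, ← hs_def, one_div]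
    rw [h2, Complex.exp_mul_I, ← Complex.ofReal_cos, ← Complex.ofReal_sin, hcφ, hsφ]
    have : (((uFun g θ * Real.sqrt (sigmaK g θ) : ℝ) : ℂ)
        + ((wFun g θ * Real.sqrt (sigmaK g θ) : ℝ) : ℂ) * Complex.I) ^ 2
        = M ^ 2 * ((Real.sqrt (sigmaK g θ) ^ 2 : ℝ) : ℂ) := by
      rw [hM]; push_cast; ring
    rw [this, hσ]
    push_cast
    ring
  -- cos/sin of θ/2 in terms of q
  have hcos : ((Real.cos (θ / 2) : ℝ) : ℂ) = (q + q⁻¹) / 2 := by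
    rw [Complex.ofReal_cos]
    simp only [Complex.cos, neg_mul, Complex.exp_neg]
    rfl
  have hsin : ((Real.sin (θ / 2) : ℝ) : ℂ) = (q⁻¹ - q) * Complex.I / 2 := by
    rw [Complex.ofReal_sin]
    simp only [Complex.sin, neg_mul, Complex.exp_neg]
    rfl
  have hMz : q * M = α * z + β := by
    rw [hM, ← hq2]
    have hu : ((uFun g θ : ℝ) : ℂ) = a * ((Real.cos (θ/2) : ℝ) : ℂ) + e * ((Real.sin (θ/2) : ℝ) : ℂ) := by
      rw [uFun, ha, he]; push_cast; ring
    have hw : ((wFun g θ : ℝ) : ℂ) = b * ((Real.cos (θ/2) : ℝ) : ℂ) + d * ((Real.sin (θ/2) : ℝ) : ℂ) := by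
      rw [wFun, hb, hd]; push_cast; ring
    rw [hu, hw, hcos, hsin, hα, hβ]
    field_simp
    ring
  have hNz : q * N = α' * z + β' := by
    rw [hN, ← hq2]
    have hu : ((uFun g θ : ℝ) : ℂ) = a * ((Real.cos (θ/2) : ℝ) : ℂ) + e * ((Real.sin (θ/2) : ℝ) : ℂ) := by
      rw [uFun, ha, he]; push_cast; ring
    have hw : ((wFun g θ : ℝ) : ℂ) = b * ((Real.cos (θ/2) : ℝ) : ℂ) + d * ((Real.sin (θ/2) : ℝ) : ℂ) := by
      rw [wFun, hb, hd]; push_cast; ring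
    rw [hu, hw, hcos, hsin, hα', hβ']
    field_simp
    ring
  have hM' : M = (α * z + β) * q⁻¹ := by
    rw [← hMz]; field_simp
  have hN' : N = (α' * z + β') * q⁻¹ := by
    rw [← hNz]; field_simp
  have hMpow : ∀ p p' : ℕ, p + p' = 2 * ℓ →
      M ^ p * N ^ p' = (α * z + β) ^ p * (α' * z + β') ^ p' * (z ^ ℓ)⁻¹ := by
    intro p p' hpp
    have hinv : (q⁻¹ : ℂ) ^ p * (q⁻¹) ^ p' = (z ^ ℓ)⁻¹ := by
      rw [← pow_add, hpp, ← hq2, inv_pow, ← pow_mul]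
    rw [hM', hN', mul_pow, mul_pow]
    calc (α * z + β) ^ p * (q⁻¹) ^ p * ((α' * z + β') ^ p' * (q⁻¹) ^ p')
        = (α * z + β) ^ p * (α' * z + β') ^ p' * ((q⁻¹) ^ p * (q⁻¹) ^ p') := by ring
      _ = _ := by rw [hinv]
  -- main per-term identity
  have hterm : ∀ n ∈ Finset.Icc (-(ℓ : ℤ)) (ℓ : ℤ),
      sigmaKpow g θ (ℓ : ℂ) * Complex.exp (Complex.I * (n : ℂ) * (φ θ : ℂ))
        = (α * z + β) ^ ((ℓ : ℤ) + n).toNat * (α' * z + β') ^ ((ℓ : ℤ) - n).toNat * (z ^ ℓ)⁻¹ := by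
    intro n hn
    rw [Finset.mem_Icc] at hn
    have h1 : Complex.I * (n : ℂ) * (φ θ : ℂ) = (n : ℂ) * ((φ θ : ℂ) * Complex.I) := by ring
    rw [h1, Complex.exp_int_mul, hE, hσpow]
    have hzp : ((s : ℂ)) ^ (ℓ : ℕ) * (M ^ 2 * (s : ℂ)⁻¹) ^ n
        = M ^ ((ℓ : ℤ) + n) * N ^ ((ℓ : ℤ) - n) := by
      have e1 : (M ^ 2 * (s : ℂ)⁻¹) ^ n = M ^ (2 * n) * (s : ℂ) ^ (-n) := by
        rw [mul_zpow, ← zpow_natCast M 2, ← zpow_mul, zpow_neg, inv_zpow]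
        norm_num
      have e2 : ((s : ℂ)) ^ (ℓ : ℕ) = (s : ℂ) ^ (ℓ : ℤ) := (zpow_natCast _ _).symm
      have h2 : M ^ ((ℓ : ℤ) + n) = M ^ ((ℓ : ℤ) - n) * M ^ (2 * n) := by
        rw [← zpow_add₀ hMne, show (ℓ : ℤ) - n + 2 * n = (ℓ : ℤ) + n by ring]
      have h3 : (s : ℂ) ^ ((ℓ : ℤ) - n) = M ^ ((ℓ : ℤ) - n) * N ^ ((ℓ : ℤ) - n) := by
        rw [← mul_zpow, hMN]
      have h4 : (s : ℂ) ^ (ℓ : ℤ) * (s : ℂ) ^ (-n) = (s : ℂ) ^ ((ℓ : ℤ) - n) := by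
        rw [← zpow_add₀ hsC, show (ℓ : ℤ) + -n = (ℓ : ℤ) - n by ring]
      calc ((s : ℂ)) ^ (ℓ : ℕ) * (M ^ 2 * (s : ℂ)⁻¹) ^ n
          = ((s : ℂ) ^ (ℓ : ℤ) * (s : ℂ) ^ (-n)) * M ^ (2 * n) := by rw [e2, e1]; ring
        _ = (M ^ ((ℓ : ℤ) - n) * N ^ ((ℓ : ℤ) - n)) * M ^ (2 * n) := by rw [h4, h3]
        _ = (M ^ ((ℓ : ℤ) - n) * M ^ (2 * n)) * N ^ ((ℓ : ℤ) - n) := by ring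
        _ = M ^ ((ℓ : ℤ) + n) * N ^ ((ℓ : ℤ) - n) := by rw [← h2]
    rw [hzp]
    have e3 : M ^ ((ℓ : ℤ) + n) = M ^ ((ℓ : ℤ) + n).toNat := by
      rw [← zpow_natCast M (((ℓ : ℤ) + n).toNat), Int.toNat_of_nonneg (by omega)]
    have e4 : N ^ ((ℓ : ℤ) - n) = N ^ ((ℓ : ℤ) - n).toNat := by
      rw [← zpow_natCast N (((ℓ : ℤ) - n).toNat), Int.toNat_of_nonneg (by omega)]
    rw [e3, e4, hMpow _ _ (by omega)]
  calc sigmaKpow g θ (ℓ : ℂ) *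
          ∑ n ∈ Finset.Icc (-(ℓ : ℤ)) (ℓ : ℤ), c n * Complex.exp (Complex.I * n * φ θ)
      = ∑ n ∈ Finset.Icc (-(ℓ : ℤ)) (ℓ : ℤ),
          c n * ((α * z + β) ^ ((ℓ : ℤ) + n).toNat * (α' * z + β') ^ ((ℓ : ℤ) - n).toNat)
            * (z ^ ℓ)⁻¹ := by
        rw [Finset.mul_sum]
        refine Finset.sum_congr rfl fun n hn => ?_
        rw [show sigmaKpow g θ (ℓ : ℂ) * (c n * Complex.exp (Complex.I * n * φ θ))
            = c n * (sigmaKpow g θ (ℓ : ℂ) * Complex.exp (Complex.I * (n : ℂ) * (φ θ : ℂ))) by ring,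
          hterm n hn]
        ring
    _ = P.eval z * (z ^ ℓ)⁻¹ := by
        rw [← Finset.sum_mul, hP, Polynomial.eval_finset_sum]
        congr 1
        refine Finset.sum_congr rfl fun n _ => ?_
        simp
    _ = ∑ k ∈ Finset.range (2 * ℓ + 1), P.coeff k * z ^ k * (z ^ ℓ)⁻¹ := by
        rw [Polynomial.eval_eq_sum_range' hdeg, Finset.sum_mul]
    _ = ∑ n ∈ Finset.Icc (-(ℓ : ℤ)) (ℓ : ℤ),
          P.coeff ((ℓ : ℤ) + n).toNat * Complex.exp (Complex.I * n * θ) := by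
        refine Finset.sum_nbij' (fun k => (k : ℤ) - ℓ) (fun m => ((ℓ : ℤ) + m).toNat)
          ?_ ?_ ?_ ?_ ?_
        · intro k hk; rw [Finset.mem_range] at hk; rw [Finset.mem_Icc]; omega
        · intro m hm; rw [Finset.mem_Icc] at hm; rw [Finset.mem_range]; omega
        · intro k hk; rw [Finset.mem_range] at hk; omega
        · intro m hm; rw [Finset.mem_Icc] at hm; omega
        · intro k hk
          rw [Finset.mem_range] at hk
          have hk' : ((ℓ : ℤ) + ((k : ℤ) - ℓ)).toNat = k := by omega
          rw [hk']
          have h1 : Complex.I * ((((k : ℤ) - ℓ) : ℤ) : ℂ) * (θ : ℂ)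
              = ((((k : ℤ) - ℓ) : ℤ) : ℂ) * ((θ : ℂ) * Complex.I) := by ring
          rw [h1, Complex.exp_int_mul, ← hz]
          have h5 : z ^ (((k : ℤ) - ℓ) : ℤ) = z ^ (k : ℕ) * (z ^ ℓ)⁻¹ := by
            rw [show (k : ℤ) - ℓ = (k : ℤ) + (-(ℓ : ℤ)) by ring, zpow_add₀ hzne, zpow_neg,
              zpow_natCast, zpow_natCast]
          rw [h5]
          ring


end
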